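/- Let S be a right LCM monoid with generalized scale N. If s, t ∈ S satisfy N_s, N_t ∈ Irr N(S) and N_s ≠ N_t, then sS ∩ tS ≠ ∅. -/
import Mathlib


variable {S : Type*}

/-- The principal right ideal `sS` of a monoid. -/
def rIdeal [Monoid S] (s : S) : Set S := {x | ∃ r : S, x = s * r}

/-- A right LCM monoid: left cancellative, and any intersection of two principal
right ideals is empty or again a principal right ideal. -/
def IsRightLCMMonoid (S : Type*) [Monoid S] : Prop :=
  (∀ a b c : S, a * b = a * c → b = c) ∧
  (∀ s t : S, rIdeal s ∩ rIdeal t = (∅ : Set S) ∨ ∃ r : S, rIdeal s ∩ rIdeal t = rIdeal r)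

/-- The core of a right LCM monoid. -/
def core (S : Type*) [Monoid S] : Set S := {a | ∀ s : S, (rIdeal a ∩ rIdeal s).Nonempty}

/-- Core equivalence: `s ∼ t` iff `s * a = t * b` for some core elements `a, b`. -/
def coreEquiv [Monoid S] (s t : S) : Prop :=
  ∃ a ∈ core S, ∃ b ∈ core S, s * a = t * b

/-- A generalized scale on a right LCM monoid. -/
def IsGenScale [Monoid S] (N : S →* ℕ+) : Prop :=
  (∃ s : S, N s ≠ 1) ∧
  (∀ n : ℕ+, (∃ s : S, N s = n) →
    Nat.card (Quot (fun x y : {s : S // N s = n} => coreEquiv x.1 y.1)) = (n : ℕ)) ∧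
  (∀ s t : S, N s = N t → coreEquiv s t ∨ rIdeal s ∩ rIdeal t = (∅ : Set S)) ∧
  (∀ (s : S) (n : ℕ+), (∃ u : S, N u = n) →
    ∃ t : S, N t = n ∧ (rIdeal s ∩ rIdeal t).Nonempty)

/-- Irreducibility of an element of the image submonoid `N(S) ⊆ ℕ^×`. -/
def IrrInScale [Monoid S] (N : S →* ℕ+) (n : ℕ+) : Prop :=
  n ≠ 1 ∧ ∀ k l : ℕ+, (∃ u : S, N u = k) → (∃ v : S, N v = l) → n = k * l → k = 1 ∨ l = 1

section Aux

variable [Monoid S]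

lemma self_mem_rIdeal (s : S) : s ∈ rIdeal s := ⟨1, (mul_one s).symm⟩

lemma inter_comm_ne {A B : Set S} (h : (A ∩ B).Nonempty) : (B ∩ A).Nonempty := by
  obtain ⟨x, h1, h2⟩ := h; exact ⟨x, h2, h1⟩

lemma one_mem_core : (1 : S) ∈ core S :=
  fun s => ⟨s, ⟨s, (one_mul s).symm⟩, self_mem_rIdeal s⟩

lemma core_mul {a b : S} (ha : a ∈ core S) (hb : b ∈ core S) : a * b ∈ core S := by
  intro v
  obtain ⟨x, ⟨m, hm⟩, ⟨n, hn⟩⟩ := ha v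
  obtain ⟨y, ⟨i, hi⟩, ⟨j, hj⟩⟩ := hb m
  refine ⟨a * b * i, ⟨i, rfl⟩, ⟨n * j, ?_⟩⟩
  rw [mul_assoc, ← hi, hj, ← mul_assoc, ← hm, hn, mul_assoc]

lemma core_right_div (hcan : ∀ a b c : S, a * b = a * c → b = c)
    {b g : S} (h : b * g ∈ core S) : g ∈ core S := by
  intro v
  obtain ⟨x, ⟨k, hk⟩, ⟨l, hl⟩⟩ := h (b * v)
  refine ⟨g * k, ⟨k, rfl⟩, ⟨l, ?_⟩⟩
  apply hcan b
  rw [← mul_assoc, ← mul_assoc, ← hk, ← hl]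

lemma coreEquiv_refl (s : S) : coreEquiv s s := ⟨1, one_mem_core, 1, one_mem_core, rfl⟩

lemma coreEquiv_symm {s t : S} : coreEquiv s t → coreEquiv t s :=
  fun ⟨a, ha, b, hb, h⟩ => ⟨b, hb, a, ha, h.symm⟩

lemma coreEquiv_trans (hS : IsRightLCMMonoid S) {s t u : S} :
    coreEquiv s t → coreEquiv t u → coreEquiv s u := by
  rintro ⟨a, ha, b, hb, hab⟩ ⟨c, hc, d, hd, hcd⟩
  rcases hS.2 b c with hemp | ⟨e, he⟩
  · obtain ⟨x, hxb, hxc⟩ := hb c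
    exact absurd (hemp ▸ (⟨hxb, hxc⟩ : x ∈ rIdeal b ∩ rIdeal c)) (Set.notMem_empty x)
  · have hee : e ∈ rIdeal b ∩ rIdeal c := he ▸ self_mem_rIdeal e
    obtain ⟨⟨g, hg⟩, ⟨h, hh⟩⟩ := hee
    have hecore : e ∈ core S := by
      intro v
      obtain ⟨x1, ⟨k, hk⟩, ⟨l, hl⟩⟩ := hb v
      obtain ⟨x2, ⟨m1, hm1⟩, ⟨m2, hm2⟩⟩ := hc x1
      have hx2 : x2 ∈ rIdeal e := by
        rw [← he]
        exact ⟨⟨k * m2, by rw [hm2, hk, mul_assoc]⟩, ⟨m1, hm1⟩⟩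
      obtain ⟨n, hn⟩ := hx2
      exact ⟨x2, ⟨n, hn⟩, ⟨l * m2, by rw [hm2, hl, mul_assoc]⟩⟩
    have hgcore : g ∈ core S := core_right_div hS.1 (hg ▸ hecore)
    have hhcore : h ∈ core S := core_right_div hS.1 (hh ▸ hecore)
    refine ⟨a * g, core_mul ha hgcore, d * h, core_mul hd hhcore, ?_⟩
    rw [← mul_assoc, hab, mul_assoc, ← hg, hh, ← mul_assoc, hcd, mul_assoc]

lemma coreEquiv_transfer {u u' v : S} (h : coreEquiv u u')
    (hne : (rIdeal u ∩ rIdeal v).Nonempty) : (rIdeal u' ∩ rIdeal v).Nonempty := by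
  obtain ⟨a, ha, b, hb, hab⟩ := h
  obtain ⟨x, ⟨c, hc⟩, ⟨d, hd⟩⟩ := hne
  obtain ⟨y, ⟨e, he⟩, ⟨f, hf⟩⟩ := ha c
  refine ⟨u' * (b * e), ⟨b * e, rfl⟩, ⟨d * f, ?_⟩⟩
  rw [← mul_assoc, ← hab, mul_assoc, ← he, hf, ← mul_assoc, ← hc, hd, mul_assoc]

lemma coreEquiv_nonempty {u v : S} (h : coreEquiv u v) : (rIdeal u ∩ rIdeal v).Nonempty := by
  obtain ⟨a, _, b, _, hab⟩ := h
  exact ⟨u * a, ⟨a, rfl⟩, ⟨b, hab⟩⟩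

lemma coreEquiv_mul_left {a b : S} (c : S) (h : coreEquiv a b) : coreEquiv (c * a) (c * b) := by
  obtain ⟨x, hx, y, hy, hxy⟩ := h
  exact ⟨x, hx, y, hy, by rw [mul_assoc, hxy, ← mul_assoc]⟩

/-- Extract the relation from an equality of `Quot.mk`s, using that `coreEquiv`
is an equivalence relation. -/
lemma quot_exact (hS : IsRightLCMMonoid S) (N : S →* ℕ+) {n : ℕ+} {x y : {s : S // N s = n}}
    (h : (Quot.mk (fun x y : {s : S // N s = n} => coreEquiv x.1 y.1) x) = Quot.mk _ y) :
    coreEquiv x.1 y.1 := by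
  have hx : Quot.lift (fun z : {s : S // N s = n} => coreEquiv x.1 z.1)
      (fun a b hab => propext ⟨fun h' => coreEquiv_trans hS h' hab,
        fun h' => coreEquiv_trans hS h' (coreEquiv_symm hab)⟩)
      (Quot.mk _ x) := coreEquiv_refl x.1
  rw [h] at hx
  exact hx

/-- Core elements have scale value 1. -/
lemma core_N_one (hS : IsRightLCMMonoid S) (N : S →* ℕ+) (hN : IsGenScale N)
    {a : S} (ha : a ∈ core S) : N a = 1 := by
  have hcard := hN.2.1 (N a) ⟨a, rfl⟩
  have hsub : ∀ x y : Quot (fun x y : {s : S // N s = N a} => coreEquiv x.1 y.1), x = y := by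
    intro x y
    induction x using Quot.ind with
    | _ u =>
      induction y using Quot.ind with
      | _ v =>
        have key : ∀ w : {s : S // N s = N a}, coreEquiv a w.1 := by
          intro w
          rcases hN.2.2.1 a w.1 w.2.symm with h | h
          · exact h
          · exfalso
            have := ha w.1
            rw [h] at this
            exact Set.not_nonempty_empty this
        exact Quot.sound (coreEquiv_trans hS (coreEquiv_symm (key u)) (key v))
  have h1 : Nat.card (Quot (fun x y : {s : S // N s = N a} => coreEquiv x.1 y.1)) = 1 :=
    Nat.card_eq_one_iff_unique.mpr ⟨⟨hsub⟩, ⟨Quot.mk _ ⟨a, rfl⟩⟩⟩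
  have : ((N a : ℕ+) : ℕ) = 1 := by rw [← hcard, h1]
  exact PNat.coe_eq_one_iff.mp this

/-- Elements of scale value 1 are core. -/
lemma N_one_core (hS : IsRightLCMMonoid S) (N : S →* ℕ+) (hN : IsGenScale N)
    {a : S} (ha : N a = 1) : a ∈ core S := by
  intro v
  obtain ⟨u, hu1, hu2⟩ := hN.2.2.2 v 1 ⟨1, map_one N⟩
  have hcard : Nat.card (Quot (fun x y : {s : S // N s = (1 : ℕ+)} => coreEquiv x.1 y.1)) = 1 :=
    hN.2.1 1 ⟨1, map_one N⟩
  have hss := (Nat.card_eq_one_iff_unique.mp hcard).1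
  have hq : Quot.mk (fun x y : {s : S // N s = (1 : ℕ+)} => coreEquiv x.1 y.1) ⟨u, hu1⟩
      = Quot.mk _ ⟨a, ha⟩ := Subsingleton.elim _ _
  have hequiv : coreEquiv u a := quot_exact hS N hq
  exact coreEquiv_transfer hequiv (inter_comm_ne hu2)

/-- If `N r = m * k`, `N u = m` and `rS ∩ uS ≠ ∅`, then `r ∼ u * b` with `N b = k`. -/
lemma exists_factor (hS : IsRightLCMMonoid S) (N : S →* ℕ+) (hN : IsGenScale N)
    {r u : S} {m k : ℕ+} (hr : N r = m * k) (hu : N u = m)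
    (hk : ∃ w : S, N w = k) (hmeet : (rIdeal r ∩ rIdeal u).Nonempty) :
    ∃ b : S, N b = k ∧ coreEquiv r (u * b) := by
  obtain ⟨x, ⟨i, hi⟩, ⟨j, hj⟩⟩ := hmeet
  obtain ⟨b, hb1, hb2⟩ := hN.2.2.2 j k hk
  obtain ⟨z, ⟨g, hg⟩, ⟨h', hh⟩⟩ := hb2
  refine ⟨b, hb1, ?_⟩
  have hN2 : N r = N (u * b) := by rw [hr, map_mul, hu, hb1]
  rcases hN.2.2.1 r (u * b) hN2 with h | h
  · exact h
  · exfalso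
    have hx : x * g ∈ rIdeal r ∩ rIdeal (u * b) := by
      constructor
      · exact ⟨i * g, by rw [hi, mul_assoc]⟩
      · exact ⟨h', by rw [hj, mul_assoc, ← hg, hh, ← mul_assoc]⟩
    rw [h] at hx
    exact Set.notMem_empty _ hx

/-- Two elements of `N⁻¹(m)` whose ideals both meet `rS` (with `N r = m * k`) are
core equivalent. -/
lemma met_unique (hS : IsRightLCMMonoid S) (N : S →* ℕ+) (hN : IsGenScale N)
    {r u u' : S} {m k : ℕ+} (hr : N r = m * k) (hu : N u = m) (hu' : N u' = m)
    (hk : ∃ w : S, N w = k)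
    (h1 : (rIdeal r ∩ rIdeal u).Nonempty) (h2 : (rIdeal r ∩ rIdeal u').Nonempty) :
    coreEquiv u u' := by
  obtain ⟨b, hb, hrb⟩ := exists_factor hS N hN hr hu hk h1
  obtain ⟨b', hb', hrb'⟩ := exists_factor hS N hN hr hu' hk h2
  have h3 : coreEquiv (u * b) (u' * b') := coreEquiv_trans hS (coreEquiv_symm hrb) hrb'
  obtain ⟨x, ⟨c, hc⟩, ⟨d, hd⟩⟩ := coreEquiv_nonempty h3
  rcases hN.2.2.1 u u' (hu.trans hu'.symm) with h | h
  · exact h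
  · exfalso
    have hx : x ∈ rIdeal u ∩ rIdeal u' :=
      ⟨⟨b * c, by rw [hc, mul_assoc]⟩, ⟨b' * d, by rw [hd, mul_assoc]⟩⟩
    rw [h] at hx
    exact Set.notMem_empty _ hx

/-- Key injectivity step: if two elements of `N⁻¹(N s * N t)` meet the same
`s''` (of value `N s`) and the same `u` (of value `N t`), they are equivalent. -/
lemma key_inj (hS : IsRightLCMMonoid S) (N : S →* ℕ+) (hN : IsGenScale N)
    {s t : S} (hs : IrrInScale N (N s)) (ht : IrrInScale N (N t)) (hne : N s ≠ N t)
    {r r' s'' u : S}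
    (hr : N r = N s * N t) (hr' : N r' = N s * N t)
    (hs'' : N s'' = N s) (hu : N u = N t)
    (hm1 : (rIdeal r ∩ rIdeal s'').Nonempty)
    (hm2 : (rIdeal r ∩ rIdeal u).Nonempty)
    (hm3 : (rIdeal r' ∩ rIdeal s'').Nonempty)
    (hm4 : (rIdeal r' ∩ rIdeal u).Nonempty) :
    coreEquiv r r' := by
  obtain ⟨a, hNa, hra⟩ := exists_factor hS N hN hr hs'' ⟨t, rfl⟩ hm1
  obtain ⟨a', hNa', hra'⟩ := exists_factor hS N hN hr' hs'' ⟨t, rfl⟩ hm3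
  obtain ⟨c, hNc, hrc⟩ := exists_factor hS N hN (by rw [hr, mul_comm]) hu ⟨s, rfl⟩ hm2
  obtain ⟨c', hNc', hrc'⟩ := exists_factor hS N hN (by rw [hr', mul_comm]) hu ⟨s, rfl⟩ hm4
  have e1 : coreEquiv (s'' * a) (u * c) := coreEquiv_trans hS (coreEquiv_symm hra) hrc
  have e2 : coreEquiv (s'' * a') (u * c') := coreEquiv_trans hS (coreEquiv_symm hra') hrc'
  obtain ⟨e, he, f, hf, hef⟩ := e1
  obtain ⟨e', he', f', hf', hef'⟩ := e2
  have hx : s'' * (a * e) ∈ rIdeal s'' ∩ rIdeal u :=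
    ⟨⟨a * e, rfl⟩, ⟨c * f, by rw [← mul_assoc, hef, mul_assoc]⟩⟩
  rcases hS.2 s'' u with hemp | ⟨w, hw⟩
  · rw [hemp] at hx
    exact absurd hx (Set.notMem_empty _)
  have hy : s'' * (a' * e') ∈ rIdeal s'' ∩ rIdeal u :=
    ⟨⟨a' * e', rfl⟩, ⟨c' * f', by rw [← mul_assoc, hef', mul_assoc]⟩⟩
  have hwmem : w ∈ rIdeal s'' ∩ rIdeal u := by rw [hw]; exact self_mem_rIdeal w
  obtain ⟨⟨m, hm⟩, ⟨k, hk⟩⟩ := hwmem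
  rw [hw] at hx hy
  obtain ⟨z1, hz1⟩ := hx
  obtain ⟨z2, hz2⟩ := hy
  have hae : a * e = m * z1 := hS.1 s'' _ _ (by rw [hz1, hm, mul_assoc])
  have ha'e' : a' * e' = m * z2 := hS.1 s'' _ _ (by rw [hz2, hm, mul_assoc])
  have hNe : N e = 1 := core_N_one hS N hN he
  have hNe' : N e' = 1 := core_N_one hS N hN he'
  have hq1 : N t = N m * N z1 := by
    have := congrArg N hae
    rw [map_mul, map_mul, hNa, hNe, mul_one] at this
    exact this
  rcases ht.2 (N m) (N z1) ⟨m, rfl⟩ ⟨z1, rfl⟩ hq1 with hm1' | hz1'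
  · -- N m = 1 forces N s = N t, contradiction
    exfalso
    have hNw : N w = N s := by rw [hm, map_mul, hs'', hm1', mul_one]
    have hNwk : N s = N t * N k := by rw [← hNw, hk, map_mul, hu]
    rcases hs.2 (N t) (N k) ⟨t, rfl⟩ ⟨k, rfl⟩ hNwk with h | h
    · exact ht.1 h
    · exact hne (by rw [hNwk, h, mul_one])
  · have hz1core : z1 ∈ core S := N_one_core hS N hN hz1'
    have ham : coreEquiv a m := ⟨e, he, z1, hz1core, hae⟩
    have hNm : N m = N t := by rw [hq1, hz1', mul_one]
    have hq2 : N t = N m * N z2 := by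
      have := congrArg N ha'e'
      rw [map_mul, map_mul, hNa', hNe', mul_one] at this
      exact this
    have hz2' : N z2 = 1 := by
      have h4 : N t = N t * N z2 := hNm ▸ hq2
      have h3 : N t * 1 = N t * N z2 := by rw [mul_one]; exact h4
      exact (mul_left_cancel h3).symm
    have hz2core : z2 ∈ core S := N_one_core hS N hN hz2'
    have ha'm : coreEquiv a' m := ⟨e', he', z2, hz2core, ha'e'⟩
    have haa' : coreEquiv a a' := coreEquiv_trans hS ham (coreEquiv_symm ha'm)
    exact coreEquiv_trans hS hra
      (coreEquiv_trans hS (coreEquiv_mul_left s'' haa') (coreEquiv_symm hra'))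

end Aux

theorem stmt15 [Monoid S] (hS : IsRightLCMMonoid S)
    (N : S →* ℕ+) (hN : IsGenScale N)
    (s t : S) (hs : IrrInScale N (N s)) (ht : IrrInScale N (N t))
    (hne : N s ≠ N t) :
    (rIdeal s ∩ rIdeal t).Nonempty := by
  classical
  have hwit : ∃ w : S, N w = N s * N t := ⟨s * t, map_mul N s t⟩
  have hPx : ∀ r : S, ∃ u : S, N u = N s ∧ (rIdeal r ∩ rIdeal u).Nonempty := fun r =>
    hN.2.2.2 r (N s) ⟨s, rfl⟩
  have hQx : ∀ r : S, ∃ u : S, N u = N t ∧ (rIdeal r ∩ rIdeal u).Nonempty := fun r =>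
    hN.2.2.2 r (N t) ⟨t, rfl⟩
  let pP : S → S := fun r => (hPx r).choose
  let pQ : S → S := fun r => (hQx r).choose
  have pP_N : ∀ r, N (pP r) = N s := fun r => (hPx r).choose_spec.1
  have pP_meet : ∀ r, (rIdeal r ∩ rIdeal (pP r)).Nonempty := fun r => (hPx r).choose_spec.2
  have pQ_N : ∀ r, N (pQ r) = N t := fun r => (hQx r).choose_spec.1
  have pQ_meet : ∀ r, (rIdeal r ∩ rIdeal (pQ r)).Nonempty := fun r => (hQx r).choose_spec.2
  let QT := Quot (fun x y : {x : S // N x = N s * N t} => coreEquiv x.1 y.1)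
  let QP := Quot (fun x y : {x : S // N x = N s} => coreEquiv x.1 y.1)
  let QQ := Quot (fun x y : {x : S // N x = N t} => coreEquiv x.1 y.1)
  let g : {x : S // N x = N s * N t} → QP × QQ := fun r =>
    (Quot.mk _ ⟨pP r.1, pP_N r.1⟩, Quot.mk _ ⟨pQ r.1, pQ_N r.1⟩)
  have hresp : ∀ a b : {x : S // N x = N s * N t}, coreEquiv a.1 b.1 → g a = g b := by
    intro a b hab
    have hP : coreEquiv (pP a.1) (pP b.1) :=
      met_unique hS N hN (r := b.1) b.2 (pP_N a.1) (pP_N b.1) ⟨t, rfl⟩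
        (coreEquiv_transfer hab (pP_meet a.1)) (pP_meet b.1)
    have hQ : coreEquiv (pQ a.1) (pQ b.1) :=
      met_unique hS N hN (r := b.1) (m := N t) (k := N s) (by rw [b.2, mul_comm])
        (pQ_N a.1) (pQ_N b.1) ⟨s, rfl⟩
        (coreEquiv_transfer hab (pQ_meet a.1)) (pQ_meet b.1)
    exact Prod.ext (Quot.sound hP) (Quot.sound hQ)
  let f : QT → QP × QQ := Quot.lift g hresp
  have hinj : Function.Injective f := by
    intro c c'
    induction c using Quot.ind with
    | _ r =>
      induction c' using Quot.ind with
      | _ r' =>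
        intro h
        have hgh : g r = g r' := h
        have h1 : coreEquiv (pP r.1) (pP r'.1) := quot_exact hS N (congrArg Prod.fst hgh)
        have h2 : coreEquiv (pQ r.1) (pQ r'.1) := quot_exact hS N (congrArg Prod.snd hgh)
        apply Quot.sound
        have hm3 : (rIdeal r'.1 ∩ rIdeal (pP r.1)).Nonempty :=
          inter_comm_ne (coreEquiv_transfer (coreEquiv_symm h1) (inter_comm_ne (pP_meet r'.1)))
        have hm4 : (rIdeal r'.1 ∩ rIdeal (pQ r.1)).Nonempty :=
          inter_comm_ne (coreEquiv_transfer (coreEquiv_symm h2) (inter_comm_ne (pQ_meet r'.1)))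
        exact key_inj hS N hN hs ht hne r.2 r'.2 (pP_N r.1) (pQ_N r.1)
          (pP_meet r.1) (pQ_meet r.1) hm3 hm4
  have hcT : Nat.card QT = ((N s : ℕ) * (N t : ℕ)) := by
    have := hN.2.1 (N s * N t) hwit
    rw [PNat.mul_coe] at this
    exact this
  have hcP : Nat.card QP = (N s : ℕ) := hN.2.1 (N s) ⟨s, rfl⟩
  have hcQ : Nat.card QQ = (N t : ℕ) := hN.2.1 (N t) ⟨t, rfl⟩
  haveI finP : Finite QP := Nat.finite_of_card_ne_zero (by rw [hcP]; exact (N s).ne_zero)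
  haveI finQ : Finite QQ := Nat.finite_of_card_ne_zero (by rw [hcQ]; exact (N t).ne_zero)
  have hbij : Function.Bijective f := by
    rw [Nat.bijective_iff_injective_and_card]
    exact ⟨hinj, by rw [hcT, Nat.card_prod, hcP, hcQ]⟩
  obtain ⟨c, hc⟩ := hbij.2 (Quot.mk _ ⟨s, rfl⟩, Quot.mk _ ⟨t, rfl⟩)
  induction c using Quot.ind with
  | _ r =>
    have hgc : g r = (Quot.mk _ ⟨s, rfl⟩, Quot.mk _ ⟨t, rfl⟩) := hc
    have h1 : coreEquiv (pP r.1) s := quot_exact hS N (congrArg Prod.fst hgc)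
    have h2 : coreEquiv (pQ r.1) t := quot_exact hS N (congrArg Prod.snd hgc)
    have hrs : (rIdeal r.1 ∩ rIdeal s).Nonempty :=
      inter_comm_ne (coreEquiv_transfer h1 (inter_comm_ne (pP_meet r.1)))
    have hrt : (rIdeal r.1 ∩ rIdeal t).Nonempty :=
      inter_comm_ne (coreEquiv_transfer h2 (inter_comm_ne (pQ_meet r.1)))
    obtain ⟨a, hNa, hra⟩ := exists_factor hS N hN r.2 rfl ⟨t, rfl⟩ hrs
    have hfin : (rIdeal (s * a) ∩ rIdeal t).Nonempty := coreEquiv_transfer hra hrt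
    obtain ⟨x, ⟨w1, hw1⟩, hx2⟩ := hfin
    exact ⟨x, ⟨a * w1, by rw [hw1, mul_assoc]⟩, hx2⟩
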